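/- arXiv:2411.02386 — 3 statements merged into one kernel-verified Lean document; each statement's English description precedes it below -/
import Mathlib

section
/- Let G be a top-branching 1-GVAS and B ∈ ℕ. Suppose that for each lower nonterminal V ∈ Low(G) there exists a thin 1-GVAS H_V with R_{H_V} = R_{G_V}, and that for each top nonterminal X of G there exists a thin 1-GVAS H_X with R_{H_X} ⊆ R_{G_X} and R_{H_X} ∩ (ℕ² ∖ [0,B]²) = R_{G_X} ∩ (ℕ² ∖ [0,B]²), where G_W denotes G with initial nonterminal changed to W. Then there exists a thin 1-GVAS H with R_H = R_G. -/
/-!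
A thin `H_S` for the initial nonterminal already has the right reachability pairs outside
`[0,B]²` and only pairs of `R_G` inside it. The finitely many missing pairs `(a, b) ∈ R_G ∩ [0,B]²`
are added back through a fresh start symbol `S'` with rules `S' → S` and `S' → (-a) b`. The run
`-a, b` is valid exactly from counter values `a + k`, where it reaches `b + k`; such pairs lie in
`R_G` again, since adding a constant to the counter preserves validity. The fresh start symbol
occurs in no right-hand side, so no branching is created.
-/

namespace GVASPaper

/-- A one-dimensional Grammar Vector Addition System: a context-free grammar
whose terminals are integers. -/
abbrev GVAS1 : Type 1 := ContextFreeGrammar ℤ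

/-- A run (list of integers) is valid at `a` if no prefix sum drops `a` below zero. -/
def ValidRun (a : ℕ) (w : List ℤ) : Prop :=
  ∀ j : ℕ, 0 ≤ (a : ℤ) + (w.take j).sum

namespace GVAS1

/-- `a →_{𝒮(G)} b`: some complete derivation from the initial nonterminal yields a run
valid at `a` with total effect `b - a`. -/
def Reach (g : GVAS1) (a b : ℕ) : Prop :=
  ∃ w : List ℤ,
    g.Derives [Symbol.nonterminal g.initial] (w.map Symbol.terminal) ∧
    ValidRun a w ∧ (a : ℤ) + w.sum = (b : ℤ)

/-- The reachability relation `R_G ⊆ ℕ²`. -/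
def RRel (g : GVAS1) : Set (ℕ × ℕ) := {p | g.Reach p.1 p.2}

/-- A nonterminal is branching if it derives a sentential form containing
two copies of itself. -/
def Branching (g : GVAS1) (X : g.NT) : Prop :=
  ∃ α β γ : List (Symbol ℤ g.NT),
    g.Derives [Symbol.nonterminal X]
      (α ++ Symbol.nonterminal X :: (β ++ Symbol.nonterminal X :: γ))

/-- A 1-GVAS is thin if all its nonterminals are thin (not branching). -/
def Thin (g : GVAS1) : Prop := ∀ X : g.NT, ¬ g.Branching X

/-- Edge of the graph of the grammar: `Y` occurs in the right-hand side of a rule for `X`. -/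
def Edge (g : GVAS1) (X Y : g.NT) : Prop :=
  ∃ r ∈ g.rules, r.input = X ∧ Symbol.nonterminal Y ∈ r.output

/-- `X` is in the top component: `X` and the initial nonterminal lie in the same
strongly connected component of the graph of the grammar. -/
def InTop (g : GVAS1) (X : g.NT) : Prop :=
  Relation.ReflTransGen g.Edge g.initial X ∧ Relation.ReflTransGen g.Edge X g.initial

/-- A 1-GVAS is top-branching if the nonterminals of its top component are branching. -/
def TopBranching (g : GVAS1) : Prop :=
  ∀ X : g.NT, g.InTop X → g.Branching X

/-- The same grammar with the initial nonterminal changed to `V`. -/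
def withInit (g : GVAS1) (V : g.NT) : GVAS1 :=
  { g with initial := V }

end GVAS1

end GVASPaper

section AddWords

variable {T : Type*} {N : Type}

namespace Symbol

def liftSome : Symbol T N → Symbol T (Option N)
  | .terminal t => .terminal t
  | .nonterminal n => .nonterminal (some n)

@[simp] lemma liftSome_terminal (t : T) :
    liftSome (.terminal t : Symbol T N) = .terminal t := rfl

@[simp] lemma liftSome_nonterminal (n : N) :
    liftSome (.nonterminal n : Symbol T N) = .nonterminal (some n) := rfl

lemma liftSome_injective : Function.Injective (liftSome : Symbol T N → Symbol T (Option N)) := by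
  rintro (_ | _) (_ | _) h <;> simp_all

@[simp] lemma liftSome_ne_nonterminal_none (s : Symbol T N) : liftSome s ≠ .nonterminal none := by
  cases s <;> simp

lemma liftSome_eq_nonterminal_some {s : Symbol T N} {n : N} :
    liftSome s = .nonterminal (some n) ↔ s = .nonterminal n := by
  cases s <;> simp

@[simp] lemma liftSome_comp_terminal :
    (liftSome : Symbol T N → Symbol T (Option N)) ∘ Symbol.terminal = Symbol.terminal :=
  rfl

lemma nonterminal_none_not_mem_map_liftSome (v : List (Symbol T N)) :
    Symbol.nonterminal none ∉ v.map liftSome := by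
  simp

lemma map_liftSome_eq_append_cons {v : List (Symbol T N)} {p q : List (Symbol T (Option N))}
    {n : N} (h : v.map liftSome = p ++ .nonterminal (some n) :: q) :
    ∃ p₀ q₀, v = p₀ ++ .nonterminal n :: q₀ ∧ p = p₀.map liftSome ∧ q = q₀.map liftSome := by
  obtain ⟨p₀, l, rfl, rfl, hl⟩ := List.map_eq_append_iff.1 h
  obtain ⟨s, q₀, rfl, hs, rfl⟩ := List.map_eq_cons_iff.1 hl
  exact ⟨p₀, q₀, by rw [liftSome_eq_nonterminal_some.1 hs], rfl, rfl⟩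

end Symbol

namespace ContextFreeRule

def liftSome (r : ContextFreeRule T N) : ContextFreeRule T (Option N) :=
  ⟨some r.input, r.output.map Symbol.liftSome⟩

lemma Rewrites.input_eq_and_eq_output {r : ContextFreeRule T N} {n : N}
    {u : List (Symbol T N)} (h : r.Rewrites [.nonterminal n] u) : r.input = n ∧ u = r.output := by
  rcases h with _ | ⟨_, h⟩
  · simp
  · cases h

end ContextFreeRule

namespace ContextFreeGrammar

lemma Derives.eq_of_map_terminal {g : ContextFreeGrammar T} {w : List T}
    {v : List (Symbol T g.NT)} (h : g.Derives (w.map Symbol.terminal) v) :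
    v = w.map Symbol.terminal := by
  rcases h.eq_or_head with rfl | ⟨_, ⟨r, -, hr⟩, -⟩
  · rfl
  · simpa using hr.nonterminal_input_mem

open Classical in
@[reducible] noncomputable def addWords (g : ContextFreeGrammar T) (W : Finset (List T)) :
    ContextFreeGrammar T where
  NT := Option g.NT
  initial := none
  rules := insert ⟨none, [.nonterminal (some g.initial)]⟩
    (g.rules.image ContextFreeRule.liftSome ∪ W.image fun w => ⟨none, w.map .terminal⟩)

variable {g : ContextFreeGrammar T} {W : Finset (List T)}

lemma mem_addWords_rules {r : ContextFreeRule T (Option g.NT)} :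
    r ∈ (g.addWords W).rules ↔ r = ⟨none, [.nonterminal (some g.initial)]⟩ ∨
      (∃ r₀ ∈ g.rules, r₀.liftSome = r) ∨ ∃ w ∈ W, ⟨none, w.map .terminal⟩ = r := by
  simp [addWords]

lemma Derives.map_liftSome {u v : List (Symbol T g.NT)} (h : g.Derives u v) :
    (g.addWords W).Derives (u.map Symbol.liftSome) (v.map Symbol.liftSome) := by
  induction h with
  | refl => rfl
  | tail _ step ih =>
    obtain ⟨r, hr, hrw⟩ := step
    obtain ⟨p, q, rfl, rfl⟩ := hrw.exists_parts
    refine ih.trans_produces ⟨r.liftSome, mem_addWords_rules.2 (.inr (.inl ⟨r, hr, rfl⟩)), ?_⟩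
    simpa [ContextFreeRule.liftSome] using
      r.liftSome.rewrites_of_exists_parts (p.map Symbol.liftSome) (q.map Symbol.liftSome)

lemma exists_derives_of_addWords_derives {u : List (Symbol T g.NT)}
    {v : List (Symbol T (Option g.NT))}
    (h : (g.addWords W).Derives (u.map Symbol.liftSome) v) :
    ∃ v₀, v = v₀.map Symbol.liftSome ∧ g.Derives u v₀ := by
  induction h with
  | refl => exact ⟨u, rfl, Relation.ReflTransGen.refl⟩
  | tail _ step ih =>
    obtain ⟨v₀, rfl, hd⟩ := ih
    obtain ⟨r, hr, hrw⟩ := step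
    rcases mem_addWords_rules.1 hr with rfl | ⟨r₀, hr₀, rfl⟩ | ⟨w, -, rfl⟩
    · exact absurd hrw.nonterminal_input_mem (Symbol.nonterminal_none_not_mem_map_liftSome v₀)
    · obtain ⟨p, q, hv, rfl⟩ := hrw.exists_parts
      obtain ⟨p₀, q₀, rfl, rfl, rfl⟩ := Symbol.map_liftSome_eq_append_cons
        (by simpa [ContextFreeRule.liftSome] using hv)
      refine ⟨p₀ ++ r₀.output ++ q₀, by simp [ContextFreeRule.liftSome], hd.trans_produces ?_⟩
      exact ⟨r₀, hr₀, by simpa using r₀.rewrites_of_exists_parts p₀ q₀⟩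
    · exact absurd hrw.nonterminal_input_mem (Symbol.nonterminal_none_not_mem_map_liftSome v₀)

lemma addWords_derives_none {v : List (Symbol T (Option g.NT))}
    (h : (g.addWords W).Derives [.nonterminal none] v) :
    v = [.nonterminal none] ∨
      (∃ v₀, v = v₀.map Symbol.liftSome ∧ g.Derives [.nonterminal g.initial] v₀) ∨
      ∃ w ∈ W, v = w.map .terminal := by
  rcases h.eq_or_head with rfl | ⟨u, ⟨r, hr, hrw⟩, hd⟩
  · exact .inl rfl
  obtain ⟨hin, rfl⟩ := hrw.input_eq_and_eq_output
  rcases mem_addWords_rules.1 hr with rfl | ⟨r₀, -, rfl⟩ | ⟨w, hw, rfl⟩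
  · exact .inr (.inl (exists_derives_of_addWords_derives (u := [.nonterminal g.initial])
      (by simpa using hd)))
  · simp [ContextFreeRule.liftSome] at hin
  · exact .inr (.inr ⟨w, hw, hd.eq_of_map_terminal⟩)

theorem mem_language_addWords {w : List T} :
    w ∈ (g.addWords W).language ↔ w ∈ g.language ∨ w ∈ W := by
  simp only [mem_language_iff]
  constructor
  · intro h
    rcases addWords_derives_none h with h | ⟨v₀, hv, hd⟩ | ⟨w', hw', hv⟩
    · cases w <;> simp at h
    · left
      have : v₀ = w.map Symbol.terminal :=
        List.map_injective_iff.2 Symbol.liftSome_injective (by simpa using hv.symm)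
      rwa [this] at hd
    · right
      rwa [List.map_injective_iff.2 (fun _ _ ↦ Symbol.terminal.inj) hv]
  · rintro (h | h)
    · refine Produces.trans_derives ⟨_, mem_addWords_rules.2 (.inl rfl), .input_output⟩ ?_
      simpa using h.map_liftSome (W := W)
    · exact Produces.single ⟨_, mem_addWords_rules.2 (.inr (.inr ⟨w, h, rfl⟩)), .input_output⟩

end ContextFreeGrammar

end AddWords

namespace GVASPaper

open ContextFreeGrammar

lemma validRun_pair {a c d : ℕ} : ValidRun a [-(c : ℤ), d] ↔ c ≤ a := by
  refine ⟨fun h ↦ by simpa using h 1, fun h j ↦ ?_⟩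
  rcases j with _ | _ | j <;> simp <;> omega

namespace GVAS1

variable {g : GVAS1} {a b : ℕ}

theorem Thin.addWords (hg : g.Thin) (W : Finset (List ℤ)) : GVAS1.Thin (g.addWords W) := by
  rintro (_ | n) ⟨α, β, γ, h⟩
  · rcases addWords_derives_none h with h | ⟨v₀, hv, -⟩ | ⟨w, -, hv⟩
    · have := congrArg List.length h
      simp at this
      omega
    · exact Symbol.nonterminal_none_not_mem_map_liftSome v₀ (hv ▸ by simp)
    · simpa using congrArg (Symbol.nonterminal none ∈ ·) hv
  · obtain ⟨v₀, hv, hd⟩ := exists_derives_of_addWords_derives (u := [.nonterminal n])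
      (by simpa using h)
    obtain ⟨α₀, l, rfl, -, hl⟩ := Symbol.map_liftSome_eq_append_cons hv.symm
    obtain ⟨β₀, γ₀, rfl, -, -⟩ := Symbol.map_liftSome_eq_append_cons hl.symm
    exact hg n ⟨α₀, β₀, γ₀, hd⟩

lemma reach_iff_exists_mem_language :
    g.Reach a b ↔ ∃ w ∈ g.language, ValidRun a w ∧ (a : ℤ) + w.sum = b :=
  Iff.rfl

lemma reach_addWords {W : Finset (List ℤ)} :
    GVAS1.Reach (g.addWords W) a b ↔
      g.Reach a b ∨ ∃ w ∈ W, ValidRun a w ∧ (a : ℤ) + w.sum = b := by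
  simp only [reach_iff_exists_mem_language, mem_language_addWords, or_and_right, exists_or]

lemma Reach.add_right (h : g.Reach a b) (k : ℕ) : g.Reach (a + k) (b + k) := by
  obtain ⟨w, hd, hv, hs⟩ := h
  refine ⟨w, hd, fun j ↦ ?_, ?_⟩
  · have := hv j
    push_cast
    linarith
  · push_cast
    linarith

open Classical in
noncomputable def boxWords (g : GVAS1) (B : ℕ) : Finset (List ℤ) :=
  ((Finset.range (B + 1) ×ˢ Finset.range (B + 1)).filter fun p ↦ g.Reach p.1 p.2).image
    fun p ↦ [-(p.1 : ℤ), p.2]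

lemma pair_mem_boxWords {B : ℕ} (ha : a ≤ B) (hb : b ≤ B) (h : g.Reach a b) :
    [-(a : ℤ), b] ∈ g.boxWords B := by
  classical
  refine Finset.mem_image.2 ⟨(a, b), Finset.mem_filter.2 ⟨?_, h⟩, rfl⟩
  simp only [Finset.mem_product, Finset.mem_range]
  omega

lemma Reach.of_mem_boxWords {B : ℕ} {w : List ℤ} (hw : w ∈ g.boxWords B) (hrun : ValidRun a w)
    (hsum : (a : ℤ) + w.sum = b) : g.Reach a b := by
  classical
  obtain ⟨⟨c, d⟩, hcd, rfl⟩ := Finset.mem_image.1 hw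
  obtain ⟨k, rfl⟩ := Nat.exists_eq_add_of_le (validRun_pair.1 hrun)
  obtain rfl : b = d + k := by simp at hsum; omega
  exact (Finset.mem_filter.1 hcd).2.add_right k

end GVAS1

theorem bounded_area_general (G : GVAS1) (B : ℕ)
    (htopapp : ∀ X : G.NT, G.InTop X →
      ∃ HX : GVAS1, Finite HX.NT ∧ HX.Thin ∧
        HX.RRel ⊆ (G.withInit X).RRel ∧
        HX.RRel ∩ {p : ℕ × ℕ | ¬ (p.1 ≤ B ∧ p.2 ≤ B)} =
          (G.withInit X).RRel ∩ {p : ℕ × ℕ | ¬ (p.1 ≤ B ∧ p.2 ≤ B)}) :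
    ∃ H : GVAS1, Finite H.NT ∧ H.Thin ∧ H.RRel = G.RRel := by
  obtain ⟨HS, _, hthin, hsub, hout⟩ := htopapp G.initial ⟨.refl, .refl⟩
  refine ⟨HS.addWords (G.boxWords B), inferInstanceAs (Finite (Option HS.NT)),
    hthin.addWords _, ?_⟩
  ext ⟨a, b⟩
  change GVAS1.Reach _ a b ↔ G.Reach a b
  rw [GVAS1.reach_addWords]
  constructor
  · rintro (h | ⟨w, hw, hrun, hsum⟩)
    · exact hsub (show (a, b) ∈ HS.RRel from h)
    · exact .of_mem_boxWords hw hrun hsum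
  · intro h
    by_cases hbox : a ≤ B ∧ b ≤ B
    · exact .inr ⟨_, GVAS1.pair_mem_boxWords hbox.1 hbox.2 h, validRun_pair.2 le_rfl, by simp⟩
    · have : (a, b) ∈ HS.RRel ∩ {p : ℕ × ℕ | ¬ (p.1 ≤ B ∧ p.2 ≤ B)} := hout ▸ ⟨h, hbox⟩
      exact .inl this.1

/-- If `G` is top-branching, every lower nonterminal has a thin equivalent,
and every top nonterminal `X` has a thin 1-GVAS exactly under-approximating `G_X` outside
the square `[0,B]²`, then `G` admits an equivalent thin 1-GVAS. -/
theorem bounded_area (G : GVAS1) [Finite G.NT] (B : ℕ)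
    (htop : G.TopBranching)
    (hlow : ∀ V : G.NT, ¬ G.InTop V →
      ∃ HV : GVAS1, Finite HV.NT ∧ HV.Thin ∧ HV.RRel = (G.withInit V).RRel)
    (htopapp : ∀ X : G.NT, G.InTop X →
      ∃ HX : GVAS1, Finite HX.NT ∧ HX.Thin ∧
        HX.RRel ⊆ (G.withInit X).RRel ∧
        HX.RRel ∩ {p : ℕ × ℕ | ¬ (p.1 ≤ B ∧ p.2 ≤ B)} =
          (G.withInit X).RRel ∩ {p : ℕ × ℕ | ¬ (p.1 ≤ B ∧ p.2 ≤ B)}) :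
    ∃ H : GVAS1, Finite H.NT ∧ H.Thin ∧ H.RRel = G.RRel :=
  bounded_area_general G B htopapp

end GVASPaper
end

section
/- For every semilinear diagonal relation R ⊆ ℕ² there exists a thin 1-GVAS G with R_G = R. -/
/-!
Write `R = ⋃ᵢ (bᵢ + Pᵢ*)` and take the grammar with rules `S → Xᵢ`, `Xᵢ → (-bᵢ.1) (bᵢ.2)` and
`Xᵢ → (-p.1) Xᵢ (p.2)` for `p ∈ Pᵢ`. No right-hand side contains two nonterminals, so the number of
nonterminals never grows along a derivation and the grammar is thin. A complete derivation using
the periods `p₁, …, pₖ` yields the run `-p₁.1 ⋯ -pₖ.1 -bᵢ.1 bᵢ.2 pₖ.2 ⋯ p₁.2`: all decrements come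
first, so the run is valid from `a` exactly when `a ≥ x.1` for `x = bᵢ + Σ pⱼ`, and it then ends at
`a - x.1 + x.2`. Hence the reachability relation is `R + {(d, d) | d ∈ ℕ}`, which is `R` because
`R` is diagonal.
-/

namespace GVASPaper

/-- A linear subset of a commutative monoid: `b + P*` for a finite set `P` of periods. -/
def IsLinearSet {M : Type*} [AddCommMonoid M] (S : Set M) : Prop :=
  ∃ (b : M) (P : Finset M),
    S = (fun q => b + q) '' (AddSubmonoid.closure (P : Set M) : Set M)

/-- A semilinear set: a finite union of linear sets. -/
def IsSemilinearSet {M : Type*} [AddCommMonoid M] (S : Set M) : Prop :=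
  ∃ (n : ℕ) (L : Fin n → Set M), (∀ i, IsLinearSet (L i)) ∧ S = ⋃ i, L i

end GVASPaper

namespace ContextFreeGrammar

variable {T : Type*} {g : ContextFreeGrammar T}

def nonterminalCount {N : Type*} (s : List (Symbol T N)) : ℕ :=
  s.countP (· matches .nonterminal _)

def IsLinear (g : ContextFreeGrammar T) : Prop :=
  ∀ r ∈ g.rules, nonterminalCount r.output ≤ 1

theorem Produces.nonterminalCount_le (hg : g.IsLinear) {u v : List (Symbol T g.NT)}
    (h : g.Produces u v) : nonterminalCount v ≤ nonterminalCount u := by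
  obtain ⟨r, hr, hrw⟩ := h
  obtain ⟨p, q, rfl, rfl⟩ := hrw.exists_parts
  have := hg r hr
  simp only [nonterminalCount, List.countP_append, List.countP_cons_of_pos, List.countP_nil]
    at this ⊢
  omega

theorem Derives.nonterminalCount_le (hg : g.IsLinear) {u v : List (Symbol T g.NT)}
    (h : g.Derives u v) : nonterminalCount v ≤ nonterminalCount u := by
  induction h with
  | refl => rfl
  | tail _ hstep ih => exact (hstep.nonterminalCount_le hg).trans ih

theorem not_produces_map_terminal (w : List T) (t : List (Symbol T g.NT)) :
    ¬ g.Produces (w.map .terminal) t := fun h => by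
  obtain ⟨r, -, hr⟩ := h.exists_nonterminal_input_mem
  simp at hr

theorem produces_terminal_context_iff {u v : List T} {X : g.NT} {t : List (Symbol T g.NT)} :
    g.Produces (u.map .terminal ++ .nonterminal X :: v.map .terminal) t ↔
      ∃ r ∈ g.rules, r.input = X ∧ t = u.map .terminal ++ r.output ++ v.map .terminal := by
  constructor
  · rintro ⟨r, hr, hrw⟩
    obtain ⟨p, q, hs, rfl⟩ := hrw.exists_parts
    rw [List.append_assoc, List.singleton_append,
      List.append_cons_inj_of_notMem (by simp) (by simp)] at hs
    obtain ⟨rfl, hX, rfl⟩ := hs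
    exact ⟨r, hr, (Symbol.nonterminal.inj hX).symm, rfl⟩
  · rintro ⟨r, hr, rfl, rfl⟩
    exact ⟨r, hr, by simpa using r.rewrites_of_exists_parts (u.map .terminal) (v.map .terminal)⟩

end ContextFreeGrammar

namespace GVASPaper

open ContextFreeGrammar Set
open scoped Pointwise

theorem GVAS1.thin_of_isLinear {g : GVAS1} (hg : g.IsLinear) : g.Thin := by
  rintro X ⟨α, β, γ, h⟩
  have := h.nonterminalCount_le hg
  simp only [nonterminalCount, List.countP_append, List.countP_cons_of_pos, List.countP_nil]
    at this
  omega

theorem validRun_neg_cons {a m : ℕ} {w : List ℤ} :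
    ValidRun a (-(m : ℤ) :: w) ↔ m ≤ a ∧ ValidRun (a - m) w := by
  have step (j : ℕ) :
      (a : ℤ) + ((-(m : ℤ) :: w).take (j + 1)).sum = (a - m : ℤ) + (w.take j).sum := by
    rw [List.take_succ_cons, List.sum_cons]
    ring
  constructor
  · intro h
    have hm : m ≤ a := by simpa [step] using h 1
    refine ⟨hm, fun j => ?_⟩
    rw [Nat.cast_sub hm, ← step]
    exact h (j + 1)
  · rintro ⟨hm, h⟩ (_ | j)
    · simp
    · rw [step, ← Nat.cast_sub hm]
      exact h j

theorem validRun_append_natCast {a k : ℕ} {w : List ℤ} :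
    ValidRun a (w ++ [(k : ℤ)]) ↔ ValidRun a w := by
  constructor
  · intro h j
    rw [List.take_eq_take_min,
      ← List.take_append_of_le_length (min_le_right j w.length) (l₂ := [(k : ℤ)])]
    exact h _
  · intro h j
    rw [List.take_append, List.sum_append]
    have : 0 ≤ (List.take (j - w.length) [(k : ℤ)]).sum := by
      rcases j - w.length with _ | _ <;> simp
    linarith [h j]

def nestedRun (x : ℕ × ℕ) (l : List (ℕ × ℕ)) : List ℤ :=
  l.map (fun p => -(p.1 : ℤ)) ++ [-(x.1 : ℤ), (x.2 : ℤ)] ++ l.reverse.map (fun p => (p.2 : ℤ))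

@[simp]
theorem nestedRun_nil (x : ℕ × ℕ) : nestedRun x [] = [-(x.1 : ℤ), (x.2 : ℤ)] := rfl

@[simp]
theorem nestedRun_cons (x p : ℕ × ℕ) (l : List (ℕ × ℕ)) :
    nestedRun x (p :: l) = -(p.1 : ℤ) :: (nestedRun x l ++ [(p.2 : ℤ)]) := by
  simp [nestedRun]

theorem sum_nestedRun (x : ℕ × ℕ) (l : List (ℕ × ℕ)) :
    (nestedRun x l).sum = ((x + l.sum).2 : ℤ) - (x + l.sum).1 := by
  induction l with
  | nil =>
    simp only [nestedRun_nil, List.sum_cons, List.sum_nil, add_zero]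
    ring
  | cons p l ih =>
    simp only [nestedRun_cons, List.sum_cons, List.sum_append, ih, Prod.snd_add, Prod.fst_add,
      Nat.cast_add, List.sum_nil, add_zero]
    ring

theorem validRun_nestedRun {a : ℕ} {x : ℕ × ℕ} {l : List (ℕ × ℕ)} :
    ValidRun a (nestedRun x l) ↔ (x + l.sum).1 ≤ a := by
  induction l generalizing a with
  | nil =>
    rw [nestedRun_nil, ← List.nil_append [(x.2 : ℤ)], validRun_neg_cons, validRun_append_natCast]
    simp [ValidRun]
  | cons p l ih =>
    rw [nestedRun_cons, validRun_neg_cons, validRun_append_natCast, ih]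
    simp only [List.sum_cons, Prod.fst_add]
    omega

theorem exists_add_diag_eq_iff {x : ℕ × ℕ} {a c : ℕ} :
    (∃ d : ℕ, x + (d, d) = (a, c)) ↔ x.1 ≤ a ∧ (a : ℤ) + x.2 - x.1 = c := by
  constructor
  · rintro ⟨d, hd⟩
    simp only [Prod.ext_iff, Prod.fst_add, Prod.snd_add] at hd
    omega
  · rintro ⟨hx, hc⟩
    exact ⟨a - x.1, Prod.ext (by simp only [Prod.fst_add]; omega)
      (by simp only [Prod.snd_add]; omega)⟩

theorem add_range_diag_eq {R : Set (ℕ × ℕ)}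
    (hdiag : ∀ a b : ℕ, (a, b) ∈ R → (a + 1, b + 1) ∈ R) :
    R + range (fun d : ℕ => (d, d)) = R := by
  refine Subset.antisymm ?_ fun x hx => ⟨x, hx, 0, ⟨0, rfl⟩, add_zero x⟩
  rintro _ ⟨x, hx, _, ⟨d, rfl⟩, rfl⟩
  induction d with
  | zero => exact hx
  | succ d ih => exact hdiag _ _ ih

section NestingGrammar

variable {n : ℕ} (b : Fin n → ℕ × ℕ) (P : Fin n → Finset (ℕ × ℕ))

def startRule (i : Fin n) : ContextFreeRule ℤ (Option (Fin n)) :=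
  ⟨none, [.nonterminal (some i)]⟩

def baseRule (i : Fin n) : ContextFreeRule ℤ (Option (Fin n)) :=
  ⟨some i, [.terminal (-((b i).1 : ℤ)), .terminal ((b i).2 : ℤ)]⟩

def periodRule (i : Fin n) (p : ℕ × ℕ) : ContextFreeRule ℤ (Option (Fin n)) :=
  ⟨some i, [.terminal (-(p.1 : ℤ)), .nonterminal (some i), .terminal (p.2 : ℤ)]⟩

-- reducible, so that sentential forms over `Option (Fin n)` are sentential forms of the grammar
abbrev nestingGrammar : GVAS1 where
  NT := Option (Fin n)
  initial := none
  rules := Finset.univ.image startRule ∪ Finset.univ.image (baseRule b) ∪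
    Finset.univ.biUnion fun i => (P i).image (periodRule i)

def nestedForm (l : List (ℕ × ℕ)) (X : Option (Fin n)) : List (Symbol ℤ (Option (Fin n))) :=
  (l.map fun p => -(p.1 : ℤ)).map .terminal ++
    .nonterminal X :: (l.reverse.map fun p => (p.2 : ℤ)).map .terminal

variable {b P}

theorem mem_rules_nestingGrammar {r : ContextFreeRule ℤ (Option (Fin n))} :
    r ∈ (nestingGrammar b P).rules ↔
      (∃ i, startRule i = r) ∨ (∃ i, baseRule b i = r) ∨
        ∃ i, ∃ p ∈ P i, periodRule i p = r := by
  simp only [Finset.mem_union, Finset.mem_image, Finset.mem_univ, true_and, Finset.mem_biUnion,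
    or_assoc]

theorem isLinear_nestingGrammar : (nestingGrammar b P).IsLinear := by
  intro r hr
  rcases mem_rules_nestingGrammar.mp hr with ⟨i, rfl⟩ | ⟨i, rfl⟩ | ⟨i, p, -, rfl⟩ <;>
    simp [nonterminalCount, startRule, baseRule, periodRule]

theorem produces_start_iff {t : List (Symbol ℤ (Option (Fin n)))} :
    (nestingGrammar b P).Produces [.nonterminal none] t ↔ ∃ i, t = nestedForm [] (some i) := by
  have h := produces_terminal_context_iff (g := nestingGrammar b P) (u := []) (v := [])
    (X := none) (t := t)
  simp only [List.map_nil, List.nil_append, List.append_nil] at h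
  rw [h]
  constructor
  · rintro ⟨r, hr, hri, rfl⟩
    rcases mem_rules_nestingGrammar.mp hr with ⟨i, rfl⟩ | ⟨i, rfl⟩ | ⟨i, p, -, rfl⟩
    · exact ⟨i, rfl⟩
    · simp [baseRule] at hri
    · simp [periodRule] at hri
  · rintro ⟨i, rfl⟩
    exact ⟨startRule i, mem_rules_nestingGrammar.mpr (Or.inl ⟨i, rfl⟩), rfl, rfl⟩

theorem produces_nestedForm_iff {i : Fin n} {l : List (ℕ × ℕ)}
    {t : List (Symbol ℤ (Option (Fin n)))} :
    (nestingGrammar b P).Produces (nestedForm l (some i)) t ↔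
      t = (nestedRun (b i) l).map .terminal ∨ ∃ p ∈ P i, t = nestedForm (l ++ [p]) (some i) := by
  rw [nestedForm, produces_terminal_context_iff]
  constructor
  · rintro ⟨r, hr, hri, rfl⟩
    rcases mem_rules_nestingGrammar.mp hr with ⟨j, rfl⟩ | ⟨j, rfl⟩ | ⟨j, p, hp, rfl⟩
    · simp [startRule] at hri
    · obtain rfl : j = i := Option.some.inj hri
      left
      simp [baseRule, nestedRun]
    · obtain rfl : j = i := Option.some.inj hri
      exact Or.inr ⟨p, hp, by simp [periodRule, nestedForm]⟩
  · rintro (rfl | ⟨p, hp, rfl⟩)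
    · exact ⟨baseRule b i, mem_rules_nestingGrammar.mpr (Or.inr (Or.inl ⟨i, rfl⟩)), rfl,
        by simp [baseRule, nestedRun]⟩
    · exact ⟨periodRule i p, mem_rules_nestingGrammar.mpr (Or.inr (Or.inr ⟨i, p, hp, rfl⟩)), rfl,
        by simp [periodRule, nestedForm]⟩

theorem derives_nestedForm_append {i : Fin n} (l : List (ℕ × ℕ)) {m : List (ℕ × ℕ)}
    (hm : ∀ p ∈ m, p ∈ P i) :
    (nestingGrammar b P).Derives (nestedForm l (some i)) (nestedForm (l ++ m) (some i)) := by
  induction m generalizing l with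
  | nil => simpa using Derives.refl _
  | cons p m ih =>
    rw [List.append_cons]
    exact (produces_nestedForm_iff.mpr (Or.inr ⟨p, hm p (by simp), rfl⟩)).trans_derives
      (ih (l ++ [p]) fun q hq => hm q (by simp [hq]))

theorem exists_of_derives_nestedForm {i : Fin n} {l : List (ℕ × ℕ)} (hl : ∀ p ∈ l, p ∈ P i)
    {t : List (Symbol ℤ (Option (Fin n)))}
    (h : (nestingGrammar b P).Derives (nestedForm l (some i)) t) :
    ∃ l', (∀ p ∈ l', p ∈ P i) ∧
      (t = nestedForm l' (some i) ∨ t = (nestedRun (b i) l').map .terminal) := by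
  induction h with
  | refl => exact ⟨l, hl, Or.inl rfl⟩
  | tail _ hstep ih =>
    obtain ⟨l', hl', rfl | rfl⟩ := ih
    · rcases produces_nestedForm_iff.mp hstep with rfl | ⟨p, hp, rfl⟩
      · exact ⟨l', hl', Or.inr rfl⟩
      · exact ⟨l' ++ [p], List.forall_mem_append.mpr ⟨hl', by simpa using hp⟩, Or.inl rfl⟩
    · exact (not_produces_map_terminal _ _ hstep).elim

theorem derives_map_terminal_iff {w : List ℤ} :
    (nestingGrammar b P).Derives [.nonterminal (nestingGrammar b P).initial] (w.map .terminal) ↔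
      ∃ i l, (∀ p ∈ l, p ∈ P i) ∧ w = nestedRun (b i) l := by
  constructor
  · intro h
    rcases h.eq_or_head with heq | ⟨s, hs, hst⟩
    · cases w <;> simp at heq
    obtain ⟨i, rfl⟩ := produces_start_iff.mp hs
    obtain ⟨l, hl, heq | heq⟩ := exists_of_derives_nestedForm (by simp) hst
    · have : Symbol.nonterminal (some i) ∈ w.map Symbol.terminal := by simp [heq, nestedForm]
      simp at this
    · exact ⟨i, l, hl, List.map_injective_iff.mpr (fun _ _ => Symbol.terminal.inj) heq⟩
  · rintro ⟨i, l, hl, rfl⟩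
    exact (produces_start_iff.mpr ⟨i, rfl⟩).trans_derives <|
      (derives_nestedForm_append [] hl).trans (produces_nestedForm_iff.mpr (Or.inl rfl)).single

theorem reach_nestingGrammar_iff {a c : ℕ} :
    (nestingGrammar b P).Reach a c ↔
      ∃ i, ∃ l : List (ℕ × ℕ), (∀ p ∈ l, p ∈ P i) ∧ ∃ d : ℕ, b i + l.sum + (d, d) = (a, c) := by
  constructor
  · rintro ⟨w, hder, hvalid, hsum⟩
    obtain ⟨i, l, hl, rfl⟩ := derives_map_terminal_iff.mp hder
    refine ⟨i, l, hl, exists_add_diag_eq_iff.mpr ⟨validRun_nestedRun.mp hvalid, ?_⟩⟩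
    rw [← hsum, sum_nestedRun]
    ring
  · rintro ⟨i, l, hl, hd⟩
    obtain ⟨hle, hc⟩ := exists_add_diag_eq_iff.mp hd
    refine ⟨nestedRun (b i) l, derives_map_terminal_iff.mpr ⟨i, l, hl, rfl⟩,
      validRun_nestedRun.mpr hle, ?_⟩
    rw [← hc, sum_nestedRun]
    ring

theorem rRel_nestingGrammar :
    (nestingGrammar b P).RRel =
      (⋃ i, (fun q => b i + q) '' (AddSubmonoid.closure (P i : Set (ℕ × ℕ)) : Set (ℕ × ℕ))) +
        range (fun d : ℕ => (d, d)) := by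
  ext ⟨a, c⟩
  change (nestingGrammar b P).Reach a c ↔ _
  rw [reach_nestingGrammar_iff]
  constructor
  · rintro ⟨i, l, hl, d, hd⟩
    exact ⟨_, mem_iUnion.mpr ⟨i, l.sum, AddSubmonoid.list_sum_mem _
      fun p hp => AddSubmonoid.subset_closure (hl p hp), rfl⟩, _, ⟨d, rfl⟩, hd⟩
  · rintro ⟨_, hx, _, ⟨d, rfl⟩, hd⟩
    obtain ⟨i, q, hq, rfl⟩ := mem_iUnion.mp hx
    obtain ⟨l, hl, rfl⟩ := AddSubmonoid.exists_list_of_mem_closure hq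
    exact ⟨i, l, hl, d, hd⟩

end NestingGrammar

/-- Every semilinear diagonal relation `R ⊆ ℕ²` is the reachability
relation of some thin 1-GVAS. -/
theorem semilinear_diagonal_is_thin_reachability (R : Set (ℕ × ℕ))
    (hsemi : IsSemilinearSet R)
    (hdiag : ∀ a b : ℕ, (a, b) ∈ R → (a + 1, b + 1) ∈ R) :
    ∃ G : GVAS1, Finite G.NT ∧ G.Thin ∧ G.RRel = R := by
  obtain ⟨n, L, hL, rfl⟩ := hsemi
  choose b P hLP using hL
  obtain rfl : L = _ := funext hLP
  exact ⟨nestingGrammar b P, inferInstanceAs (Finite (Option (Fin n))),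
    GVAS1.thin_of_isLinear isLinear_nestingGrammar,
    rRel_nestingGrammar.trans (add_range_diag_eq hdiag)⟩

end GVASPaper
end

section
/- Let G be a context-free grammar with n nonterminals in which every rule has right-hand side of length at most 2. Call a derivation irreducible if removing any simple cycle occurring in it (i.e. for any pair of nodes N, M with N a proper ancestor of M carrying the same nonterminal label and no label repeated along the path from N to M except at its endpoints, replacing the subtree rooted at N by the subtree rooted at M) strictly decreases the set of nonterminals occurring in the derivation. Then every irreducible derivation has all root-to-leaf paths of length at most n², and consequently has at most 2^{n²+1} nodes. -/
/-!
Follow a longest root-to-leaf path and cut its sequence of nonterminal labels at the first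
repetition: `L = P ++ x :: Q ++ x :: R` with `P ++ x :: Q` repetition-free, hence of length at
most `n`. The segment `x :: Q` is a simple cycle, and irreducibility says that removing it loses
a nonterminal, which must occur below the top of the cycle but not below its bottom. So fewer
nonterminals occur below the suffix `x :: R`, and induction on that suffix gives
`|L| ≤ n · #{nonterminals occurring in t} ≤ n²`. Since every node has at most two children, a
tree of height `h` has fewer than `2^(h+1)` nodes.
-/

namespace GVASPaper

/-- Derivation trees: leaves are labelled by symbols, internal nodes by nonterminals. -/
inductive DTree (T N : Type*) : Type _ where
  | leaf : Symbol T N → DTree T N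
  | node : N → List (DTree T N) → DTree T N

namespace DTree

variable {T N : Type*}

/-- The yield of a derivation tree: labels of leaves read from left to right. -/
def yield : DTree T N → List (Symbol T N)
  | .leaf s => [s]
  | .node _ cs => cs.attach.flatMap (fun c => yield c.1)

decreasing_by
  simp only [DTree.node.sizeOf_spec]
  have := List.sizeOf_lt_of_mem c.2
  omega

/-- The label of the root of a tree. -/
def rootLabel : DTree T N → Symbol T N
  | .leaf s => s
  | .node X _ => Symbol.nonterminal X

/-- Value of a symbol: terminals count with their integer value, nonterminals with 0. -/
def symEff : Symbol ℤ N → ℤ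
  | .terminal t => t
  | .nonterminal _ => 0

/-- The effect of a derivation tree: the sum of the integers labelling its leaves. -/
def effect (t : DTree ℤ N) : ℤ := (t.yield.map symEff).sum

/-- A derivation is complete if all its leaves are labelled by terminals. -/
def IsComplete (t : DTree T N) : Prop :=
  ∀ s ∈ t.yield, ∃ z : T, s = Symbol.terminal z

/-- The run read by a complete derivation tree. -/
def run (t : DTree ℤ N) : List ℤ :=
  t.yield.filterMap (fun s => match s with | Symbol.terminal z => some z | _ => none)

/-- Height of a tree: the maximal length (number of edges) of a root-to-leaf path. -/
def height : DTree T N → ℕ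
  | .leaf _ => 0
  | .node _ cs => (cs.attach.map (fun c => height c.1)).foldr max 0 + 1

decreasing_by
  simp only [DTree.node.sizeOf_spec]
  have := List.sizeOf_lt_of_mem c.2
  omega

/-- Number of nodes of a tree. -/
def numNodes : DTree T N → ℕ
  | .leaf _ => 1
  | .node _ cs => (cs.attach.map (fun c => numNodes c.1)).sum + 1

decreasing_by
  simp only [DTree.node.sizeOf_spec]
  have := List.sizeOf_lt_of_mem c.2
  omega

end DTree

/-- `Occurs X t`: the nonterminal `X` labels some node (internal or leaf) of `t`. -/
inductive Occurs {T N : Type*} (X : N) : DTree T N → Prop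
  | leaf : Occurs X (.leaf (Symbol.nonterminal X))
  | here (cs : List (DTree T N)) : Occurs X (.node X cs)
  | child {Y : N} {cs : List (DTree T N)} {c : DTree T N} :
      c ∈ cs → Occurs X c → Occurs X (.node Y cs)

/-- `HasRepeat t`: some root-to-leaf path of `t` contains two nodes labelled by the
same nonterminal. -/
inductive HasRepeat {T N : Type*} : DTree T N → Prop
  | here {X : N} {cs : List (DTree T N)} {c : DTree T N} :
      c ∈ cs → Occurs X c → HasRepeat (.node X cs)
  | child {Y : N} {cs : List (DTree T N)} {c : DTree T N} :
      c ∈ cs → HasRepeat c → HasRepeat (.node Y cs)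

/-- Valid derivation trees of a context-free grammar (leaves may be labelled by anything;
every internal node is expanded according to a rule of the grammar). -/
inductive IsDeriv {T : Type*} (g : ContextFreeGrammar T) : DTree T g.NT → Prop
  | leaf (s : Symbol T g.NT) : IsDeriv g (.leaf s)
  | node (X : g.NT) (cs : List (DTree T g.NT)) (r : ContextFreeRule T g.NT)
      (hr : r ∈ g.rules) (hX : r.input = X) (hout : cs.map DTree.rootLabel = r.output)
      (hcs : ∀ c ∈ cs, IsDeriv g c) : IsDeriv g (.node X cs)

/-- One-hole contexts of derivation trees; the hole stands for a distinguished leaf. -/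
inductive CycCtx (T N : Type*) : Type _ where
  | hole : CycCtx T N
  | node : N → List (DTree T N) → CycCtx T N → List (DTree T N) → CycCtx T N

namespace CycCtx

variable {T N : Type*}

/-- Plugging a tree into the hole of a context. -/
def plug : CycCtx T N → DTree T N → DTree T N
  | .hole, t => t
  | .node X l c r, t => .node X (l ++ c.plug t :: r)

/-- The root of the context is (labelled by) `X`. -/
def rootIs : CycCtx T N → N → Prop
  | .hole, _ => True
  | .node Y _ _ _, X => Y = X

/-- The left effect of a cycle: the sum of the integers labelling the leaves
to the left of the distinguished leaf. -/
def leftEff : CycCtx ℤ N → ℤ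
  | .hole => 0
  | .node _ l c _ => (l.map DTree.effect).sum + c.leftEff

/-- The right effect of a cycle: the sum of the integers labelling the leaves
to the right of the distinguished leaf. -/
def rightEff : CycCtx ℤ N → ℤ
  | .hole => 0
  | .node _ _ c r => c.rightEff + (r.map DTree.effect).sum

/-- The global effect of a cycle. -/
def globalEff (c : CycCtx ℤ N) : ℤ := c.leftEff + c.rightEff

/-- The labels of the nodes on the main branch of a cycle, from the root down to the
parent of the distinguished leaf. -/
def spine : CycCtx T N → List N
  | .hole => []
  | .node X _ c _ => X :: c.spine

end CycCtx

/-- A derivation is irreducible if removing any simple cycle occurring in it (replacing the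
subtree rooted at the top of the cycle by the subtree rooted at its distinguished leaf)
strictly decreases the set of nonterminals occurring in the derivation. Here a simple cycle
occurrence is a decomposition `t = C.plug (γ.plug σ)` where the nonempty context `γ` starts
and ends with the same nonterminal `X` and has no label repeated along its main branch. -/
def Irreducible {T : Type*} (g : ContextFreeGrammar T) (t : DTree T g.NT) : Prop :=
  ∀ (C γ : CycCtx T g.NT) (X : g.NT) (σ : DTree T g.NT),
    γ ≠ CycCtx.hole → γ.rootIs X → σ.rootLabel = Symbol.nonterminal X →
    γ.spine.Nodup → t = C.plug (γ.plug σ) →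
    {Y : g.NT | Occurs Y (C.plug σ)} ⊂ {Y : g.NT | Occurs Y t}


lemma _root_.List.Nodup.exists_eq_append_cons_of_mem {α : Type*} {M : List α} {a : α}
    (hM : M.Nodup) (ha : a ∈ M) : ∃ u v, M = u ++ a :: v ∧ (a :: u).Nodup := by
  obtain ⟨u, v, rfl⟩ := List.append_of_mem ha
  rw [List.nodup_append] at hM
  exact ⟨u, v, rfl,
    List.nodup_cons.2 ⟨fun hu => hM.2.2 a hu a List.mem_cons_self rfl, hM.1⟩⟩

lemma _root_.List.exists_cycle_of_not_nodup {α : Type*} :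
    ∀ {L : List α}, ¬ L.Nodup →
      ∃ P Q R : List α, ∃ x, L = P ++ x :: Q ++ x :: R ∧ (P ++ x :: Q).Nodup
  | [], h => absurd List.nodup_nil h
  | a :: L, h => by
    by_cases hL : L.Nodup
    · have ha : a ∈ L := by simpa [List.nodup_cons, hL] using h
      obtain ⟨u, v, rfl, hu⟩ := hL.exists_eq_append_cons_of_mem ha
      exact ⟨[], u, v, a, rfl, hu⟩
    obtain ⟨P, Q, R, x, rfl, hPQ⟩ := List.exists_cycle_of_not_nodup hL
    by_cases ha : a ∈ P ++ x :: Q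
    · obtain ⟨u, v, huv, hu⟩ := hPQ.exists_eq_append_cons_of_mem ha
      exact ⟨[], u, v ++ x :: R, a, by simp [huv], hu⟩
    · exact ⟨a :: P, Q, R, x, rfl, List.nodup_cons.2 ⟨ha, hPQ⟩⟩

lemma _root_.List.exists_eq_append_of_append_eq_append_cons {α : Type*} {l r P R : List α}
    {x : α} (hr : r.length ≤ 1) (h : l ++ r = P ++ x :: R) :
    ∃ S, l = P ++ S ∧ S ++ r = x :: R := by
  rcases List.append_eq_append_iff.1 h with ⟨a, hP, hxR⟩ | ⟨S, hl, hS⟩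
  · obtain rfl : a = [] := List.eq_nil_of_length_eq_zero (by
      have := congrArg List.length hxR
      simp only [List.length_append, List.length_cons] at this
      omega)
    exact ⟨[], by simpa using hP.symm, by simpa using hxR⟩
  · exact ⟨S, hl, hS.symm⟩

namespace DTree

variable {T N : Type*}

def rootNT : DTree T N → Option N
  | .leaf (.terminal _) => none
  | .leaf (.nonterminal X) => some X
  | .node X _ => some X

lemma rootLabel_eq_of_rootNT_eq_some {σ : DTree T N} {X : N} (h : σ.rootNT = some X) :
    σ.rootLabel = Symbol.nonterminal X := by
  rcases σ with (_ | _) | _ <;> simp_all [rootNT, rootLabel]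

lemma height_node (X : N) (cs : List (DTree T N)) :
    (node X cs).height = (cs.map height).foldr max 0 + 1 := by
  rw [height]
  simp

lemma numNodes_node (X : N) (cs : List (DTree T N)) :
    (node X cs).numNodes = (cs.map numNodes).sum + 1 := by
  rw [numNodes]
  simp

lemma height_lt_height_node {X : N} {cs : List (DTree T N)} {c : DTree T N} (hc : c ∈ cs) :
    c.height < (node X cs).height := by
  rw [height_node, Nat.lt_succ_iff]
  exact List.le_max_of_le' 0 (List.mem_map_of_mem hc) le_rfl

lemma exists_height_node_eq {X : N} {cs : List (DTree T N)} (hcs : cs ≠ []) :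
    ∃ c ∈ cs, (node X cs).height = c.height + 1 := by
  have hne : cs.map height ≠ [] := by simpa using hcs
  have hmem : (cs.map height).foldr max 0 ∈ cs.map height :=
    List.maximum_mem (List.foldr_max_of_ne_nil hne).symm
  obtain ⟨c, hc, hceq⟩ := List.mem_map.1 hmem
  exact ⟨c, hc, by rw [height_node, hceq]⟩

end DTree

namespace CycCtx

variable {T N : Type*}

def comp : CycCtx T N → CycCtx T N → CycCtx T N
  | .hole, D => D
  | .node X l c r, D => .node X l (c.comp D) r

@[simp] lemma plug_comp (C D : CycCtx T N) (t : DTree T N) :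
    (C.comp D).plug t = C.plug (D.plug t) := by
  induction C with
  | hole => rfl
  | node X l c r ih => simp [comp, plug, ih]

lemma exists_comp_of_spine_eq_append :
    ∀ {D : CycCtx T N} {P S : List N}, D.spine = P ++ S →
      ∃ A B : CycCtx T N, D = A.comp B ∧ A.spine = P ∧ B.spine = S
  | D, [], _, h => ⟨.hole, D, rfl, rfl, h⟩
  | .hole, _ :: _, _, h => by simp [spine] at h
  | .node Y l c r, _ :: _, _, h => by
      simp only [spine, List.cons_append, List.cons.injEq] at h
      obtain ⟨A, B, rfl, hA, hB⟩ := exists_comp_of_spine_eq_append h.2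
      exact ⟨.node Y l A r, B, rfl, by simp [spine, h.1, hA], hB⟩

lemma rootIs_of_spine_eq_cons {C : CycCtx T N} {X : N} {L : List N} (h : C.spine = X :: L) :
    C.rootIs X := by
  cases C <;> simp_all [spine, rootIs]

lemma rootLabel_plug_of_head? {C : CycCtx T N} {σ : DTree T N} {X : N}
    (h : (C.spine ++ σ.rootNT.toList).head? = some X) :
    (C.plug σ).rootLabel = Symbol.nonterminal X := by
  cases C with
  | hole =>
    simp only [plug]
    exact DTree.rootLabel_eq_of_rootNT_eq_some (by simpa [spine] using h)
  | node Y l c r => simp_all [spine, plug, DTree.rootLabel]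

end CycCtx

section Occurs

variable {T N : Type*}

lemma Occurs.of_rootLabel {σ : DTree T N} {X : N} (h : σ.rootLabel = Symbol.nonterminal X) :
    Occurs X σ := by
  cases σ with
  | leaf s => cases h; exact .leaf
  | node Y cs => cases h; exact .here cs

lemma Occurs.plug {Y : N} {σ : DTree T N} (C : CycCtx T N) (h : Occurs Y σ) :
    Occurs Y (C.plug σ) := by
  induction C with
  | hole => exact h
  | node X l c r ih => exact .child (List.mem_append_right _ List.mem_cons_self) ih

lemma occurs_plug_of_mem_spine {X : N} {C : CycCtx T N} (σ : DTree T N) (h : X ∈ C.spine) :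
    Occurs X (C.plug σ) := by
  induction C with
  | hole => simp [CycCtx.spine] at h
  | node Y l c r ih =>
    rcases List.mem_cons.1 h with rfl | h
    · exact .here _
    · exact .child (List.mem_append_right _ List.mem_cons_self) (ih h)

lemma occurs_plug_of_mem {X : N} {C : CycCtx T N} {σ : DTree T N}
    (h : X ∈ C.spine ++ σ.rootNT.toList) : Occurs X (C.plug σ) := by
  rcases List.mem_append.1 h with h | h
  · exact occurs_plug_of_mem_spine σ h
  · exact (Occurs.of_rootLabel (DTree.rootLabel_eq_of_rootNT_eq_some
      (Option.mem_toList.1 h))).plug C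

/-- `Occurs Y (C.plug σ')` for an arbitrary `σ'` expresses that `Y` occurs in `C` itself. -/
lemma Occurs.of_plug {Y : N} {C : CycCtx T N} {σ : DTree T N} (h : Occurs Y (C.plug σ))
    (σ' : DTree T N) : Occurs Y (C.plug σ') ∨ Occurs Y σ := by
  induction C with
  | hole => exact .inr h
  | node X l c r ih =>
    cases h with
    | here => exact .inl (.here _)
    | child hc ho =>
      rcases List.mem_append.1 hc with hc | hc
      · exact .inl (.child (List.mem_append_left _ hc) ho)
      rcases List.mem_cons.1 hc with rfl | hc
      · exact (ih ho).imp_left (.child (List.mem_append_right _ List.mem_cons_self))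
      · exact .inl (.child (List.mem_append_right _ (List.mem_cons_of_mem _ hc)) ho)

end Occurs

theorem DTree.exists_plug_height_le {T N : Type*} : ∀ t : DTree T N,
    ∃ (D : CycCtx T N) (σ : DTree T N),
      t = D.plug σ ∧ t.height ≤ (D.spine ++ σ.rootNT.toList).length
  | .leaf s => ⟨.hole, .leaf s, rfl, by simp [DTree.height]⟩
  | .node X [] => ⟨.hole, .node X [], rfl, by
      simp [DTree.height_node, DTree.rootNT, CycCtx.spine]⟩
  | .node X (c :: cs) => by
      obtain ⟨c', hc', hh⟩ := DTree.exists_height_node_eq (X := X) (List.cons_ne_nil c cs)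
      obtain ⟨D, σ, rfl, hD⟩ := exists_plug_height_le c'
      obtain ⟨l, r, hlr⟩ := List.append_of_mem hc'
      refine ⟨.node X l D r, σ, by rw [hlr]; rfl, ?_⟩
      simp only [CycCtx.spine, List.cons_append, List.length_cons]
      omega
decreasing_by
  simp only [DTree.node.sizeOf_spec]
  have := List.sizeOf_lt_of_mem hc'
  omega

section Irreducible

variable {T : Type*} {g : ContextFreeGrammar T} {t : DTree T g.NT}

lemma Irreducible.occurs_ssubset (hirr : Irreducible g t) {C γ : CycCtx T g.NT} {X : g.NT}
    {σ : DTree T g.NT} (hγ : γ ≠ CycCtx.hole) (hX : γ.rootIs X)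
    (hσ : σ.rootLabel = Symbol.nonterminal X) (hnd : γ.spine.Nodup)
    (ht : t = C.plug (γ.plug σ)) :
    {Y | Occurs Y σ} ⊂ {Y | Occurs Y (γ.plug σ)} := by
  obtain ⟨Y, hYt, hYC⟩ := Set.exists_of_ssubset (hirr C γ X σ hγ hX hσ hnd ht)
  refine ⟨fun Z hZ => hZ.plug γ, fun hsub => ?_⟩
  rcases (ht ▸ hYt : Occurs Y (C.plug (γ.plug σ))).of_plug σ with hY | hY
  · exact hYC hY
  · exact hYC ((hsub hY).plug C)

theorem Irreducible.length_path_le [Fintype g.NT] (hirr : Irreducible g t) :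
    ∀ {C D : CycCtx T g.NT} {σ : DTree T g.NT}, t = C.plug (D.plug σ) →
      (D.spine ++ σ.rootNT.toList).length ≤
        Fintype.card g.NT * {Y | Occurs Y (D.plug σ)}.ncard := by
  classical
  intro C D σ ht
  induction hn : D.spine.length using Nat.strong_induction_on generalizing C D σ with
  | _ n ih =>
    by_cases hnd : (D.spine ++ σ.rootNT.toList).Nodup
    · have hocc : (D.spine ++ σ.rootNT.toList).length ≤ {Y | Occurs Y (D.plug σ)}.ncard := by
        rw [← List.toFinset_card_of_nodup hnd, ← Set.ncard_coe_finset]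
        exact Set.ncard_le_ncard fun y hy => occurs_plug_of_mem (List.mem_toFinset.1 hy)
      rcases Nat.eq_zero_or_pos {Y | Occurs Y (D.plug σ)}.ncard with h0 | hpos
      · omega
      · exact hnd.length_le_card.trans (Nat.le_mul_of_pos_right _ hpos)
    obtain ⟨P, Q, R, x, hPQR, hPQ⟩ := List.exists_cycle_of_not_nodup hnd
    obtain ⟨S, hD, hS⟩ := List.exists_eq_append_of_append_eq_append_cons
      (by cases σ.rootNT <;> simp) hPQR
    obtain ⟨A, E, rfl, -, hE⟩ :=
      CycCtx.exists_comp_of_spine_eq_append (hD.trans (List.append_assoc _ _ _))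
    obtain ⟨γ, B, rfl, hγ, hB⟩ := CycCtx.exists_comp_of_spine_eq_append (P := x :: Q) hE
    have hlost : {Y | Occurs Y (B.plug σ)} ⊂ {Y | Occurs Y (γ.plug (B.plug σ))} :=
      hirr.occurs_ssubset (C := C.comp A) (X := x) (by rintro rfl; simp [CycCtx.spine] at hγ)
        (CycCtx.rootIs_of_spine_eq_cons hγ)
        (CycCtx.rootLabel_plug_of_head? (by simp [hB, hS]))
        (hγ ▸ hPQ.sublist (List.sublist_append_right _ _)) (by simpa using ht)
    have hrec := ih B.spine.length
      (by simp only [← hn, hD, hB, List.length_append, List.length_cons]; omega)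
      (C := (C.comp A).comp γ) (by simpa using ht) rfl
    have hcard : {Y | Occurs Y (B.plug σ)}.ncard <
        {Y | Occurs Y ((A.comp (γ.comp B)).plug σ)}.ncard :=
      Set.ncard_lt_ncard (hlost.trans_subset fun Y hY => by simpa using hY.plug A)
    have hprefix := hPQ.length_le_card
    rw [hB, hS] at hrec
    have := Nat.mul_le_mul_left (Fintype.card g.NT) hcard
    rw [hPQR]
    simp only [List.length_append, List.length_cons] at hprefix hrec ⊢
    rw [Nat.mul_succ] at this
    omega

end Irreducible

lemma IsDeriv.numNodes_lt {T : Type*} {g : ContextFreeGrammar T}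
    (hbin : ∀ r ∈ g.rules, r.output.length ≤ 2) {t : DTree T g.NT} (ht : IsDeriv g t) :
    t.numNodes < 2 ^ (t.height + 1) := by
  induction ht with
  | leaf s => simp [DTree.numNodes, DTree.height]
  | node X cs r hr _ hout _ ih =>
    have hlen : cs.length ≤ 2 := by simpa [← hout] using hbin r hr
    have hchild : ∀ n ∈ cs.map DTree.numNodes, n ≤ 2 ^ (DTree.node X cs).height - 1 := by
      intro n hn
      obtain ⟨c, hc, rfl⟩ := List.mem_map.1 hn
      have := Nat.pow_le_pow_right two_pos (DTree.height_lt_height_node (X := X) hc)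
      have := ih c hc
      omega
    have hsum := List.sum_le_card_nsmul _ _ hchild
    rw [smul_eq_mul, List.length_map] at hsum
    have := Nat.mul_le_mul_right (2 ^ (DTree.node X cs).height - 1) hlen
    have := Nat.one_le_two_pow (n := (DTree.node X cs).height)
    rw [DTree.numNodes_node, pow_succ]
    omega

/-- In a grammar with `n` nonterminals whose right-hand sides have length
at most two, every irreducible derivation has all root-to-leaf paths of length at most `n²`
and hence at most `2^(n²+1)` nodes. -/
theorem irreducible_derivation_small {T : Type*} (g : ContextFreeGrammar T) [Fintype g.NT]
    (hbin : ∀ r ∈ g.rules, r.output.length ≤ 2)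
    (t : DTree T g.NT) (ht : IsDeriv g t) (hirr : Irreducible g t) :
    t.height ≤ (Fintype.card g.NT) ^ 2 ∧
    t.numNodes ≤ 2 ^ ((Fintype.card g.NT) ^ 2 + 1) := by
  obtain ⟨D, σ, rfl, hheight⟩ := t.exists_plug_height_le
  have hocc : {Y | Occurs Y (D.plug σ)}.ncard ≤ Fintype.card g.NT := by
    simpa using Set.ncard_le_card {Y | Occurs Y (D.plug σ)}
  have hh : (D.plug σ).height ≤ Fintype.card g.NT ^ 2 :=
    calc (D.plug σ).height ≤ (D.spine ++ σ.rootNT.toList).length := hheight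
      _ ≤ Fintype.card g.NT * {Y | Occurs Y (D.plug σ)}.ncard :=
        hirr.length_path_le (C := .hole) rfl
      _ ≤ Fintype.card g.NT ^ 2 := by rw [sq]; exact Nat.mul_le_mul_left _ hocc
  refine ⟨hh, ?_⟩
  calc (D.plug σ).numNodes ≤ 2 ^ ((D.plug σ).height + 1) := (ht.numNodes_lt hbin).le
    _ ≤ 2 ^ (Fintype.card g.NT ^ 2 + 1) := Nat.pow_le_pow_right two_pos (by omega)

end GVASPaper
end
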